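/- Let M be an N×N real skew-symmetric matrix (Mᵀ = -M). Then the linear program: minimize t subject to Mx ≤ t·1, x ≥ 0, Σ x_i = 1, has optimal value 0. In particular there exists a probability vector x with Mx ≤ 0. -/

import Mathlib

open Matrix

private lemma skew_quad_zero {N : ℕ} (M : Matrix (Fin N) (Fin N) ℝ)
    (hskew : Mᵀ = -M) (x : Fin N → ℝ) : x ⬝ᵥ M.mulVec x = 0 := by
  have h2 : x ⬝ᵥ M.mulVec x = vecMul x M ⬝ᵥ x := dotProduct_mulVec _ _ _
  have h3 : vecMul x M = -(M.mulVec x) := by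
    rw [← mulVec_transpose, hskew, neg_mulVec]
  have h4 : x ⬝ᵥ M.mulVec x = -(M.mulVec x ⬝ᵥ x) := by
    rw [h2, h3, neg_dotProduct]
  rw [dotProduct_comm (M.mulVec x) x] at h4
  linarith

private lemma exists_opt {N : ℕ} (hN : 0 < N) (M : Matrix (Fin N) (Fin N) ℝ)
    (hskew : Mᵀ = -M) :
    ∃ x ∈ stdSimplex ℝ (Fin N), ∀ i, M.mulVec x i ≤ 0 := by
  by_contra hc
  push_neg at hc
  set s : Set (Fin N → ℝ) := (fun x => M.mulVec x) '' stdSimplex ℝ (Fin N) with hs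
  set T : Set (Fin N → ℝ) := {y | ∀ i, y i ≤ 0} with hT
  have hconvs : Convex ℝ s := (convex_stdSimplex ℝ _).linear_image (Matrix.mulVecLin M)
  have hcomps : IsCompact s :=
    (isCompact_stdSimplex ℝ (Fin N)).image (Matrix.mulVecLin M).continuous_of_finiteDimensional
  have hconvT : Convex ℝ T := by
    intro y hy z hz a b ha hb hab i
    have := hy i; have := hz i
    have : a * y i + b * z i ≤ 0 := by nlinarith
    simpa using this
  have hclosedT : IsClosed T := by
    have : T = ⋂ i, {y : Fin N → ℝ | y i ≤ 0} := by
      ext y; simp [hT, Set.mem_iInter]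
    rw [this]
    exact isClosed_iInter fun i =>
      isClosed_le (continuous_apply i) continuous_const
  have hdisj : Disjoint s T := by
    rw [Set.disjoint_left]
    rintro y ⟨x, hx, rfl⟩ hyT
    obtain ⟨i, hi⟩ := hc x hx
    exact absurd (hyT i) (not_le.2 hi)
  obtain ⟨f, u, v, hfs, huv, hft⟩ :=
    geometric_hahn_banach_compact_closed hconvs hcomps hconvT hclosedT hdisj
  have hv0 : v < 0 := by
    have : v < f 0 := hft 0 (fun i => le_refl 0)
    simpa using this
  -- coordinates of f
  set p : Fin N → ℝ := fun i => -f (Pi.single i 1) with hp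
  have hrep : ∀ y : Fin N → ℝ, f y = -∑ i, p i * y i := by
    intro y
    have hy : y = ∑ i, y i • (Pi.single i 1 : Fin N → ℝ) := by
      funext j
      simp [Finset.sum_apply, Pi.single_apply, Finset.sum_ite_eq']
    calc f y = f (∑ i, y i • (Pi.single i 1 : Fin N → ℝ)) := by rw [← hy]
      _ = ∑ i, y i • f (Pi.single i (1 : ℝ)) := by rw [map_sum]; simp
      _ = -∑ i, p i * y i := by
          rw [← Finset.sum_neg_distrib]
          refine Finset.sum_congr rfl fun i _ => ?_
          simp [hp]; ring
  have hpnn : ∀ i, 0 ≤ p i := by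
    intro i
    by_contra hneg
    push_neg at hneg
    -- f (e i) > 0 ; take big negative multiple
    have hfe : 0 < f (Pi.single i 1) := by
      have := hrep (Pi.single i (1:ℝ))
      simp only [hp] at hneg ⊢
      linarith
    set c : ℝ := (1 - v) / f (Pi.single i 1) with hcdef
    have hcpos : 0 < c := div_pos (by linarith) hfe
    have hmem : (-c) • (Pi.single i 1 : Fin N → ℝ) ∈ T := by
      intro j
      simp only [Pi.smul_apply, smul_eq_mul, Pi.single_apply]
      by_cases h : j = i <;> simp [h] <;> nlinarith
    have := hft _ hmem
    rw [_root_.map_smul] at this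
    have heq : (-c) • f (Pi.single i 1) = v - 1 := by
      rw [smul_eq_mul, hcdef]
      field_simp
      ring
    rw [heq] at this
    linarith
  have hpos : ∀ x ∈ stdSimplex ℝ (Fin N), 0 < p ⬝ᵥ M.mulVec x := by
    intro x hx
    have h1 : f (M.mulVec x) < u := hfs _ ⟨x, hx, rfl⟩
    have h2 : f (M.mulVec x) < 0 := lt_trans h1 (lt_trans huv hv0)
    rw [hrep] at h2
    have : 0 < ∑ i, p i * M.mulVec x i := by linarith
    simpa [dotProduct] using this
  -- p is nonzero
  set S : ℝ := ∑ i, p i with hS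
  have hSpos : 0 < S := by
    rcases lt_or_eq_of_le (Finset.sum_nonneg fun i _ => hpnn i) with h | h
    · exact h
    · exfalso
      have hall : ∀ i, p i = 0 := by
        intro i
        have := (Finset.sum_eq_zero_iff_of_nonneg (fun i _ => hpnn i)).1 h.symm
        exact this i (Finset.mem_univ i)
      have hx0 : Pi.single (⟨0, hN⟩ : Fin N) (1:ℝ) ∈ stdSimplex ℝ (Fin N) := by
        constructor
        · intro j; by_cases h : j = (⟨0, hN⟩ : Fin N) <;> simp [Pi.single_apply, h]
        · simp
      have := hpos _ hx0
      simp [dotProduct, hall] at this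
  -- normalized q
  set q : Fin N → ℝ := S⁻¹ • p with hq
  have hqmem : q ∈ stdSimplex ℝ (Fin N) := by
    constructor
    · intro i
      exact mul_nonneg (inv_nonneg.2 hSpos.le) (hpnn i)
    · simp only [hq, Pi.smul_apply, smul_eq_mul, ← Finset.mul_sum, ← hS]
      field_simp
  have h1 := hpos q hqmem
  have h2 : M.mulVec q = S⁻¹ • M.mulVec p := by
    rw [hq, mulVec_smul]
  rw [h2, dotProduct_smul, skew_quad_zero M hskew p] at h1
  simp at h1

theorem symm_game_value_zero {N : ℕ} (hN : 0 < N) (M : Matrix (Fin N) (Fin N) ℝ)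
    (hskew : Mᵀ = -M) :
    IsLeast {t : ℝ | ∃ x : Fin N → ℝ, (∀ i, 0 ≤ x i) ∧ (∑ i, x i) = 1 ∧
      ∀ i, M.mulVec x i ≤ t} 0 ∧
    ∃ x : Fin N → ℝ, (∀ i, 0 ≤ x i) ∧ (∑ i, x i) = 1 ∧ ∀ i, M.mulVec x i ≤ 0 := by
  obtain ⟨x, ⟨hxnn, hxsum⟩, hxle⟩ := exists_opt hN M hskew
  have hmem : (0:ℝ) ∈ {t : ℝ | ∃ x : Fin N → ℝ, (∀ i, 0 ≤ x i) ∧ (∑ i, x i) = 1 ∧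
      ∀ i, M.mulVec x i ≤ t} := ⟨x, hxnn, hxsum, hxle⟩
  refine ⟨⟨hmem, ?_⟩, x, hxnn, hxsum, hxle⟩
  rintro t ⟨y, hynn, hysum, hyle⟩
  have hkey := skew_quad_zero M hskew y
  have hle : y ⬝ᵥ M.mulVec y ≤ ∑ i, y i * t := by
    apply Finset.sum_le_sum
    intro i _
    exact mul_le_mul_of_nonneg_left (hyle i) (hynn i)
  rw [hkey, ← Finset.sum_mul, hysum, one_mul] at hle
  exact hle
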